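/- arXiv:1303.3791 — 10 statements merged into one kernel-verified Lean document; each statement's English description precedes it below -/
import Mathlib

section
/- For all real numbers a ≥ b > 0 and 0 < q < 1, we have a^(q/2) - a^(q-1) * b^(1-q/2) ≤ (a - b)^(q/2). -/
/-!
Since `a ≥ b`, trading the factor `a ^ (-q/2)` for `b ^ (-q/2)` only increases
`a ^ (q/2 - 1) * b`, so the left side is at most `a ^ (q/2) - a ^ (q/2 - 1) * b = a ^ (q/2 - 1) * (a - b)`.
As `q/2 - 1 < 0` and `a ≥ a - b`, this is at most `(a - b) ^ (q/2 - 1) * (a - b) = (a - b) ^ (q/2)`.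
-/

namespace Real

lemma rpow_sub_one_mul_le_rpow_add_sub_one_mul_rpow {a b p r : ℝ} (hb : 0 < b) (hba : b ≤ a)
    (hr : 0 ≤ r) : a ^ (p - 1) * b ≤ a ^ (p + r - 1) * b ^ (1 - r) := by
  have ha : 0 < a := hb.trans_le hba
  calc a ^ (p - 1) * b = a ^ (p + r - 1) * a ^ (-r) * b := by
        rw [← rpow_add ha]; ring_nf
    _ ≤ a ^ (p + r - 1) * b ^ (-r) * b := by
        gcongr _ * ?_ * _
        exact rpow_le_rpow_of_nonpos hb hba (neg_nonpos.mpr hr)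
    _ = a ^ (p + r - 1) * b ^ (1 - r) := by
        rw [mul_assoc, ← rpow_add_one hb.ne']; ring_nf

lemma rpow_sub_one_mul_sub_le_rpow_sub {a b p : ℝ} (hb : 0 ≤ b) (hba : b ≤ a) (hp : p ≤ 1) :
    a ^ (p - 1) * (a - b) ≤ (a - b) ^ p := by
  rcases hba.eq_or_lt with rfl | hlt
  · simpa using rpow_nonneg le_rfl p
  have hab : 0 < a - b := sub_pos.mpr hlt
  calc a ^ (p - 1) * (a - b) ≤ (a - b) ^ (p - 1) * (a - b) := by
        gcongr ?_ * _
        exact rpow_le_rpow_of_nonpos hab (sub_le_self a hb) (by linarith)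
    _ = (a - b) ^ p := by rw [← rpow_add_one hab.ne']; ring_nf

end Real

theorem stmt_0 (a b q : ℝ) (hba : b ≤ a) (hb : 0 < b) (hq0 : 0 < q) (hq1 : q < 1) :
    a ^ (q / 2) - a ^ (q - 1) * b ^ (1 - q / 2) ≤ (a - b) ^ (q / 2) := by
  have ha : 0 < a := hb.trans_le hba
  have hexchange : a ^ (q / 2 - 1) * b ≤ a ^ (q - 1) * b ^ (1 - q / 2) := by
    simpa using Real.rpow_sub_one_mul_le_rpow_add_sub_one_mul_rpow (p := q / 2) hb hba
      (half_pos hq0).le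
  have hsplit : a ^ (q / 2) = a ^ (q / 2 - 1) * a := by
    rw [← Real.rpow_add_one ha.ne']; ring_nf
  calc a ^ (q / 2) - a ^ (q - 1) * b ^ (1 - q / 2) ≤ a ^ (q / 2 - 1) * (a - b) := by
        rw [hsplit]; linarith
    _ ≤ (a - b) ^ (q / 2) := Real.rpow_sub_one_mul_sub_le_rpow_sub hb.le hba (by linarith)
end

section
/- For all 0 < c ≤ 1 and 0 < q < 1, it holds that 1 - c^(1-q/2) ≤ (1 - c)^(q/2). -/
theorem stmt_1 (c q : ℝ) (hc0 : 0 < c) (hc1 : c ≤ 1) (hq0 : 0 < q) (hq1 : q < 1) :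
    1 - c ^ (1 - q / 2) ≤ (1 - c) ^ (q / 2) := by
  have hc : c ≤ c ^ (1 - q / 2) := Real.self_le_rpow_of_le_one hc0.le hc1 (by linarith)
  have h1c : 1 - c ≤ (1 - c) ^ (q / 2) :=
    Real.self_le_rpow_of_le_one (by linarith) (by linarith) (by linarith)
  linarith
end

section
/- Let α, β > 0. Then for all x, y ≥ 0, (y^α - x^α)(y^β - x^β) ≥ (4αβ/(α+β)^2) * (y^((α+β)/2) - x^((α+β)/2))^2. -/
/-!
With `γ = (α + β) / 2`, each difference is an integral, `(y ^ r - x ^ r) / r = ∫ t in x..y, t ^ (r - 1)`,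
and `t ^ (γ - 1)` is the geometric mean of `t ^ (α - 1)` and `t ^ (β - 1)`. Cauchy–Schwarz therefore
gives `((y ^ γ - x ^ γ) / γ) ^ 2 ≤ (y ^ α - x ^ α) / α * ((y ^ β - x ^ β) / β)`, and
`α β / γ ^ 2 = 4 α β / (α + β) ^ 2`.
-/

open MeasureTheory Set

lemma quadratic_nonneg_of_sq_le_mul {a b c : ℝ} (ha : 0 ≤ a) (hc : 0 ≤ c) (hb : b ^ 2 ≤ a * c)
    (s : ℝ) : 0 ≤ a * (s * s) + 2 * b * s + c := by
  rcases ha.eq_or_lt with rfl | ha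
  · have hb0 : b = 0 := by nlinarith
    simp [hb0, hc]
  · -- `a * (a s² + 2 b s + c) = (a s + b)² + (a c - b²)`
    nlinarith [sq_nonneg (a * s + b)]

theorem sq_integral_le_integral_mul_integral {Ω : Type*} [MeasurableSpace Ω] {μ : Measure Ω}
    {f g h : Ω → ℝ} (hf : Integrable f μ) (hg : Integrable g μ) (hh : Integrable h μ)
    (hf0 : 0 ≤ᵐ[μ] f) (hg0 : 0 ≤ᵐ[μ] g) (hfgh : ∀ᵐ ω ∂μ, h ω ^ 2 ≤ f ω * g ω) :
    (∫ ω, h ω ∂μ) ^ 2 ≤ (∫ ω, f ω ∂μ) * ∫ ω, g ω ∂μ := by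
  have hquad : ∀ s : ℝ,
      0 ≤ (∫ ω, f ω ∂μ) * (s * s) + 2 * (∫ ω, h ω ∂μ) * s + ∫ ω, g ω ∂μ := by
    intro s
    have hint : ∫ ω, (f ω * (s * s) + 2 * h ω * s + g ω) ∂μ =
        (∫ ω, f ω ∂μ) * (s * s) + 2 * (∫ ω, h ω ∂μ) * s + ∫ ω, g ω ∂μ := by
      have hfs : Integrable (fun ω => f ω * (s * s)) μ := hf.mul_const _
      have hhs : Integrable (fun ω => 2 * h ω * s) μ := (hh.const_mul 2).mul_const s
      rw [integral_add (f := fun ω => f ω * (s * s) + 2 * h ω * s) (hfs.add hhs) hg,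
        integral_add hfs hhs, integral_mul_const, integral_mul_const, integral_const_mul]
    rw [← hint]
    refine integral_nonneg_of_ae ?_
    filter_upwards [hf0, hg0, hfgh] with ω hfω hgω hω
    exact quadratic_nonneg_of_sq_le_mul hfω hgω hω s
  have := discrim_le_zero hquad
  rw [discrim] at this
  nlinarith

lemma integral_rpow_sub_one {r : ℝ} (hr : 0 < r) (a b : ℝ) :
    ∫ t in a..b, t ^ (r - 1) = (b ^ r - a ^ r) / r := by
  rw [integral_rpow (Or.inl (by linarith))]
  simp

theorem stmt_3 (α β : ℝ) (hα : 0 < α) (hβ : 0 < β) (x y : ℝ) (hx : 0 ≤ x) (hy : 0 ≤ y) :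
    4 * α * β / (α + β) ^ 2 * (y ^ ((α + β) / 2) - x ^ ((α + β) / 2)) ^ 2 ≤
      (y ^ α - x ^ α) * (y ^ β - x ^ β) := by
  wlog hxy : x ≤ y with H
  · convert H α β hα hβ y x hy hx (le_of_not_ge hxy) using 1 <;> ring
  set γ := (α + β) / 2
  have hγ : 0 < γ := by positivity
  have hintegrable {r : ℝ} (hr : 0 < r) : IntegrableOn (fun t : ℝ => t ^ (r - 1)) (Ioc x y) :=
    (intervalIntegral.intervalIntegrable_rpow' (by linarith)).1
  have hsq : ∀ᵐ t ∂volume.restrict (Ioc x y), (t ^ (γ - 1)) ^ 2 ≤ t ^ (α - 1) * t ^ (β - 1) := by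
    refine (ae_restrict_mem measurableSet_Ioc).mono fun t ht => le_of_eq ?_
    have ht0 : 0 < t := hx.trans_lt ht.1
    rw [← Real.rpow_natCast, ← Real.rpow_mul ht0.le, ← Real.rpow_add ht0]
    congr 1
    ring
  have hnonneg (r : ℝ) : 0 ≤ᵐ[volume.restrict (Ioc x y)] fun t : ℝ => t ^ (r - 1) :=
    (ae_restrict_mem measurableSet_Ioc).mono fun t ht => Real.rpow_nonneg (hx.trans ht.1.le) _
  have hCS := sq_integral_le_integral_mul_integral (hintegrable hα) (hintegrable hβ)
    (hintegrable hγ) (hnonneg α) (hnonneg β) hsq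
  simp only [← intervalIntegral.integral_of_le hxy, integral_rpow_sub_one hα,
    integral_rpow_sub_one hβ, integral_rpow_sub_one hγ] at hCS
  calc 4 * α * β / (α + β) ^ 2 * (y ^ γ - x ^ γ) ^ 2 = α * β * ((y ^ γ - x ^ γ) / γ) ^ 2 := by
        simp only [γ]; field_simp; ring
    _ ≤ α * β * ((y ^ α - x ^ α) / α * ((y ^ β - x ^ β) / β)) := by gcongr
    _ = (y ^ α - x ^ α) * (y ^ β - x ^ β) := by field_simp
end

section
/- Let α, β > 0. Then for all x, y ≥ 0, (y^β - x^β)(y^α - x^α) ≥ (4αβ/(α+1)^2) * min(x^(β-1), y^(β-1)) * (y^((α+1)/2) - x^((α+1)/2))^2. -/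
/-!
For `x ≤ y`, the Cauchy–Schwarz inequality for `t ↦ t ^ ((α - 1) / 2)` on `[x, y]` gives
`4α (y^((α+1)/2) - x^((α+1)/2))² ≤ (α + 1)² (y - x)(y^α - x^α)`, and the mean value theorem
gives `y^β - x^β ≥ β min(x^(β-1), y^(β-1)) (y - x)`, since `t^(β-1)` at an intermediate point
lies above the smaller endpoint value. Multiplying the two and using the symmetry in `x, y`
yields the claim.
-/

open Set intervalIntegral
open scoped Interval

theorem sq_integral_le_mul_integral_sq {f : ℝ → ℝ} {a b : ℝ} (hab : a ≤ b)
    (hf : ContinuousOn f [[a, b]]) :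
    (∫ t in a..b, f t) ^ 2 ≤ (b - a) * ∫ t in a..b, f t ^ 2 := by
  rcases hab.eq_or_lt with rfl | hlt
  · simp
  set I := ∫ t in a..b, f t
  set m := I / (b - a)
  have hf1 : IntervalIntegrable f MeasureTheory.volume a b := hf.intervalIntegrable
  have hf2 : IntervalIntegrable (fun t => f t ^ 2) MeasureTheory.volume a b :=
    (hf.pow 2).intervalIntegrable
  -- `f` has nonnegative variance on `[a, b]`
  have hvar : 0 ≤ ∫ t in a..b, (f t - m) ^ 2 :=
    integral_nonneg hab fun t _ => sq_nonneg _
  have hexpand : ∫ t in a..b, (f t - m) ^ 2 =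
      (∫ t in a..b, f t ^ 2) - 2 * m * I + (b - a) * m ^ 2 := by
    have hpt : ∀ t, (f t - m) ^ 2 = f t ^ 2 - 2 * m * f t + m ^ 2 := fun t => by ring
    simp_rw [hpt]
    rw [integral_add (hf2.sub (hf1.const_mul _)) intervalIntegrable_const,
      integral_sub hf2 (hf1.const_mul _)]
    simp [integral_const_mul, I]
  have hba : 0 < b - a := sub_pos.2 hlt
  rw [hexpand] at hvar
  have hmI : (b - a) * m = I := by simp only [m]; field_simp
  nlinarith

theorem four_mul_rpow_sub_rpow_sq_le {α x y : ℝ} (hα : 0 < α) (hx : 0 < x) (hxy : x ≤ y) :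
    4 * α * (y ^ ((α + 1) / 2) - x ^ ((α + 1) / 2)) ^ 2 ≤
      (α + 1) ^ 2 * ((y - x) * (y ^ α - x ^ α)) := by
  have hpos : ∀ t ∈ [[x, y]], 0 < t := fun t ht => hx.trans_le (uIcc_of_le hxy ▸ ht).1
  have hcont : ContinuousOn (fun t : ℝ => t ^ ((α - 1) / 2)) [[x, y]] := fun t ht =>
    (Real.continuousAt_rpow_const t _ (Or.inl (hpos t ht).ne')).continuousWithinAt
  have hint : ∫ t in x..y, t ^ ((α - 1) / 2) =
      (y ^ ((α + 1) / 2) - x ^ ((α + 1) / 2)) / ((α + 1) / 2) := by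
    rw [integral_rpow (Or.inl (by linarith))]
    ring_nf
  have hint_sq : ∫ t in x..y, (t ^ ((α - 1) / 2)) ^ 2 = (y ^ α - x ^ α) / α := by
    have hpt : ∀ t ∈ [[x, y]], (t ^ ((α - 1) / 2)) ^ 2 = t ^ (α - 1) := fun t ht => by
      rw [← Real.rpow_mul_natCast (hpos t ht).le]
      norm_num
    rw [integral_congr hpt, integral_rpow (Or.inl (by linarith)), sub_add_cancel]
  have hcs := sq_integral_le_mul_integral_sq hxy hcont
  rw [hint, hint_sq] at hcs
  calc 4 * α * (y ^ ((α + 1) / 2) - x ^ ((α + 1) / 2)) ^ 2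
      = α * (α + 1) ^ 2 * ((y ^ ((α + 1) / 2) - x ^ ((α + 1) / 2)) / ((α + 1) / 2)) ^ 2 := by
        field_simp; ring
    _ ≤ α * (α + 1) ^ 2 * ((y - x) * ((y ^ α - x ^ α) / α)) := by gcongr
    _ = (α + 1) ^ 2 * ((y - x) * (y ^ α - x ^ α)) := by field_simp

theorem min_rpow_le_rpow_of_mem_Icc {x y c : ℝ} (hx : 0 < x) (hc : c ∈ Icc x y) (e : ℝ) :
    min (x ^ e) (y ^ e) ≤ c ^ e := by
  rcases le_total 0 e with he | he
  · exact (min_le_left _ _).trans (Real.rpow_le_rpow hx.le hc.1 he)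
  · exact (min_le_right _ _).trans (Real.rpow_le_rpow_of_nonpos (hx.trans_le hc.1) hc.2 he)

theorem mul_min_rpow_mul_sub_le_rpow_sub_rpow {β x y : ℝ} (hβ : 0 ≤ β) (hx : 0 < x)
    (hxy : x ≤ y) : β * min (x ^ (β - 1)) (y ^ (β - 1)) * (y - x) ≤ y ^ β - x ^ β := by
  rcases hxy.eq_or_lt with rfl | hlt
  · simp
  obtain ⟨c, hc, hslope⟩ := exists_hasDerivAt_eq_slope (fun t : ℝ => t ^ β)
    (fun t => β * t ^ (β - 1)) hlt
    (fun t ht =>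
      (Real.continuousAt_rpow_const t β (Or.inl (hx.trans_le ht.1).ne')).continuousWithinAt)
    (fun t ht => Real.hasDerivAt_rpow_const (Or.inl (hx.trans ht.1).ne'))
  have hmin := min_rpow_le_rpow_of_mem_Icc hx (Ioo_subset_Icc_self hc) (β - 1)
  calc β * min (x ^ (β - 1)) (y ^ (β - 1)) * (y - x) ≤ β * c ^ (β - 1) * (y - x) := by
        gcongr
    _ = y ^ β - x ^ β := by
        rw [hslope]; field_simp [(sub_pos.2 hlt).ne']

theorem rpow_sub_rpow_mul_rpow_sub_rpow_ge_of_le {α β x y : ℝ} (hα : 0 < α) (hβ : 0 ≤ β)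
    (hx : 0 < x) (hxy : x ≤ y) :
    4 * α * β / (α + 1) ^ 2 * min (x ^ (β - 1)) (y ^ (β - 1)) *
        (y ^ ((α + 1) / 2) - x ^ ((α + 1) / 2)) ^ 2 ≤
      (y ^ β - x ^ β) * (y ^ α - x ^ α) := by
  have hm : 0 ≤ min (x ^ (β - 1)) (y ^ (β - 1)) :=
    le_min (Real.rpow_nonneg hx.le _) (Real.rpow_nonneg (hx.le.trans hxy) _)
  have hpow := four_mul_rpow_sub_rpow_sq_le hα hx hxy
  have hmvt := mul_min_rpow_mul_sub_le_rpow_sub_rpow hβ hx hxy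
  have hA : 0 ≤ y ^ α - x ^ α := sub_nonneg.2 (Real.rpow_le_rpow hx.le hxy hα.le)
  calc 4 * α * β / (α + 1) ^ 2 * min (x ^ (β - 1)) (y ^ (β - 1)) *
        (y ^ ((α + 1) / 2) - x ^ ((α + 1) / 2)) ^ 2
      = β * min (x ^ (β - 1)) (y ^ (β - 1)) / (α + 1) ^ 2 *
        (4 * α * (y ^ ((α + 1) / 2) - x ^ ((α + 1) / 2)) ^ 2) := by ring
    _ ≤ β * min (x ^ (β - 1)) (y ^ (β - 1)) / (α + 1) ^ 2 *
        ((α + 1) ^ 2 * ((y - x) * (y ^ α - x ^ α))) := by gcongr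
    _ = β * min (x ^ (β - 1)) (y ^ (β - 1)) * (y - x) * (y ^ α - x ^ α) := by
        field_simp
    _ ≤ (y ^ β - x ^ β) * (y ^ α - x ^ α) := by gcongr

theorem stmt_4 (α β : ℝ) (hα : 0 < α) (hβ : 0 < β) (x y : ℝ) (hx : 0 < x) (hy : 0 < y) :
    4 * α * β / (α + 1) ^ 2 * min (x ^ (β - 1)) (y ^ (β - 1)) *
        (y ^ ((α + 1) / 2) - x ^ ((α + 1) / 2)) ^ 2 ≤
      (y ^ β - x ^ β) * (y ^ α - x ^ α) := by
  rcases le_total x y with hxy | hyx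
  · exact rpow_sub_rpow_mul_rpow_sub_rpow_ge_of_le hα hβ.le hx hxy
  · have h := rpow_sub_rpow_mul_rpow_sub_rpow_ge_of_le hα hβ.le hy hyx
    rw [min_comm] at h
    convert h using 1 <;> ring
end

section
/- Let τ > 0, γ > 1, and let (x_n) be a sequence of nonnegative reals with x_0 > 0 satisfying x_{n+1} - x_n + τ x_{n+1}^γ ≤ 0 for all n. Then x_n ≤ (x_0^(1-γ) + c τ n)^(-1/(γ-1)) for all n, where c = (γ-1)/(1 + γ τ x_0^(γ-1)). -/
/-!
Writing `u = τ x_{n+1}^{γ-1}`, the recursion reads `x_{n+1} (1 + u) ≤ x_n`, so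
`x_n^{1-γ} ≤ x_{n+1}^{1-γ} (1 + u)^{1-γ}`. Bernoulli's inequality `(1 + u)^γ ≥ 1 + γu` turns this
into the gain `x_{n+1}^{1-γ} - x_n^{1-γ} ≥ (γ-1) τ / (1 + γu)`, and since the sequence decreases,
`u ≤ τ x_0^{γ-1}`. Summing the gains and inverting `t ↦ t^{1-γ}` gives the bound.
-/

open Real

lemma one_add_rpow_one_sub_le_div {u γ : ℝ} (hu : 0 ≤ u) (hγ : 1 ≤ γ) :
    (1 + u) ^ (1 - γ) ≤ (1 + u) / (1 + γ * u) := by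
  have h1u : 0 < 1 + u := by linarith
  rw [rpow_sub h1u, rpow_one]
  exact div_le_div_of_nonneg_left h1u.le (by positivity)
    (one_add_mul_self_le_rpow_one_add (by linarith) hγ)

lemma rpow_one_sub_add_le_of_add_mul_rpow_le {a b τ γ M : ℝ} (hb : 0 < b) (hτ : 0 ≤ τ)
    (hγ : 1 ≤ γ) (hM : τ * b ^ (γ - 1) ≤ M) (hstep : b + τ * b ^ γ ≤ a) :
    a ^ (1 - γ) + (γ - 1) / (1 + γ * M) * τ ≤ b ^ (1 - γ) := by
  set u := τ * b ^ (γ - 1) with hu_def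
  have hu : 0 ≤ u := by positivity
  have hfac : b + τ * b ^ γ = b * (1 + u) := by
    rw [hu_def, rpow_sub_one hb.ne']; field_simp
  have hbu : b ^ (1 - γ) * u = τ := by
    rw [hu_def, mul_left_comm, ← rpow_add hb]; norm_num
  have hgain : (γ - 1) * τ / (1 + γ * u) ≤ b ^ (1 - γ) - a ^ (1 - γ) := by
    have ha : a ^ (1 - γ) ≤ b ^ (1 - γ) * (1 + u) ^ (1 - γ) := by
      rw [← mul_rpow hb.le (by linarith)]
      exact rpow_le_rpow_of_nonpos (by positivity) (hfac ▸ hstep) (by linarith)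
    calc (γ - 1) * τ / (1 + γ * u)
        = b ^ (1 - γ) * (1 - (1 + u) / (1 + γ * u)) := by
          rw [← hbu]; field_simp; ring
      _ ≤ b ^ (1 - γ) * (1 - (1 + u) ^ (1 - γ)) := by
          gcongr; exact one_add_rpow_one_sub_le_div hu hγ
      _ ≤ b ^ (1 - γ) - a ^ (1 - γ) := by linarith
  have hdenom : (γ - 1) / (1 + γ * M) * τ ≤ (γ - 1) * τ / (1 + γ * u) := by
    rw [div_mul_eq_mul_div]
    gcongr
  linarith

section

variable {τ γ : ℝ} {x : ℕ → ℝ}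

lemma antitone_of_sub_add_mul_rpow_nonpos (hτ : 0 ≤ τ) (hxnn : ∀ n, 0 ≤ x n)
    (hrec : ∀ n : ℕ, x (n + 1) - x n + τ * x (n + 1) ^ γ ≤ 0) : Antitone x :=
  antitone_nat_of_succ_le fun n => by
    have := mul_nonneg hτ (rpow_nonneg (hxnn (n + 1)) γ)
    linarith [hrec n]

lemma rpow_one_sub_add_mul_le_of_sub_add_mul_rpow_nonpos (hτ : 0 ≤ τ) (hγ : 1 ≤ γ)
    (hxnn : ∀ n, 0 ≤ x n) (hrec : ∀ n : ℕ, x (n + 1) - x n + τ * x (n + 1) ^ γ ≤ 0) :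
    ∀ n, 0 < x n →
      x 0 ^ (1 - γ) + (γ - 1) / (1 + γ * (τ * x 0 ^ (γ - 1))) * τ * n ≤ x n ^ (1 - γ) := by
  have hanti := antitone_of_sub_add_mul_rpow_nonpos hτ hxnn hrec
  intro n
  induction n with
  | zero => simp
  | succ n ih =>
    intro hpos
    have hM : τ * x (n + 1) ^ (γ - 1) ≤ τ * x 0 ^ (γ - 1) := by
      gcongr
      exact hanti (Nat.zero_le _)
    have hstep := rpow_one_sub_add_le_of_add_mul_rpow_le (a := x n) hpos hτ hγ hM
      (by linarith [hrec n])
    push_cast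
    linarith [ih (hpos.trans_le (hanti n.le_succ))]

end

lemma le_rpow_neg_inv_of_le_rpow_one_sub {x y γ : ℝ} (hx : 0 < x) (hy : 0 < y) (hγ : 1 < γ)
    (h : y ≤ x ^ (1 - γ)) : x ≤ y ^ (-(1 / (γ - 1))) := by
  have hexp : -(1 / (γ - 1)) = (1 - γ)⁻¹ := by rw [one_div, ← inv_neg, neg_sub]
  calc x = (x ^ (1 - γ)) ^ (1 - γ)⁻¹ := (rpow_rpow_inv hx.le (by linarith)).symm
    _ ≤ y ^ (-(1 / (γ - 1))) := by
      rw [hexp]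
      exact rpow_le_rpow_of_nonpos hy h (inv_nonpos.mpr (by linarith))

theorem stmt_7 (τ γ : ℝ) (hτ : 0 < τ) (hγ : 1 < γ) (x : ℕ → ℝ)
    (hx0 : 0 < x 0) (hxnn : ∀ n, 0 ≤ x n)
    (hrec : ∀ n : ℕ, x (n + 1) - x n + τ * x (n + 1) ^ γ ≤ 0) :
    ∀ n : ℕ,
      x n ≤ (x 0 ^ (1 - γ) + (γ - 1) / (1 + γ * τ * x 0 ^ (γ - 1)) * τ * n) ^ (-(1 / (γ - 1))) := by
  intro n
  have hy : 0 < x 0 ^ (1 - γ) + (γ - 1) / (1 + γ * τ * x 0 ^ (γ - 1)) * τ * n := by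
    have : 0 < 1 + γ * τ * x 0 ^ (γ - 1) := by positivity
    have : 0 < γ - 1 := by linarith
    positivity
  rcases (hxnn n).eq_or_lt with hzero | hpos
  · rw [← hzero]; positivity
  · refine le_rpow_neg_inv_of_le_rpow_one_sub hpos hy hγ ?_
    have := rpow_one_sub_add_mul_le_of_sub_add_mul_rpow_nonpos hτ.le hγ.le hxnn hrec n hpos
    rwa [← mul_assoc] at this
end

section
/- Let μ be a probability measure on a measurable space, f a nonnegative measurable function with 0 < ∫ f^q dμ < ∞ for all exponents involved, and 0 < q < 2. Then ∫ f^q log( f^q / ∫ f^q dμ ) dμ ≤ (q/(2-q)) (∫ f^q dμ) log( ∫ f² dμ / (∫ f^q dμ)^(2/q) ). -/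
/-!
With `A = ∫ f^q` and `B = ∫ f^2`, the left side is `q ∫ f^q log f - A log A`, so everything
reduces to `(2 - q) ∫ f^q log f ≤ A log (B / A)`. This is Jensen's inequality for `log` under
the probability measure `f^q dμ / A`, applied to `f^(2-q)`; it follows by integrating the
tangent-line bound `log u ≤ u - 1` at `u = (A / B) f^(2-q)` against `f^q dμ`.
-/

open MeasureTheory

namespace Real

theorem rpow_mul_log_rpow_div {t q a : ℝ} (ht : 0 ≤ t) (hq : q ≠ 0) (ha : a ≠ 0) :
    t ^ q * log (t ^ q / a) = q * (t ^ q * log t) - log a * t ^ q := by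
  rcases ht.eq_or_lt with rfl | ht
  · simp [zero_rpow hq]
  · rw [log_div (rpow_pos_of_pos ht q).ne' ha, log_rpow ht]
    ring

theorem sub_mul_rpow_mul_log_le {t p q c : ℝ} (ht : 0 ≤ t) (hq : q ≠ 0) (hc : 0 < c) :
    (p - q) * (t ^ q * log t) ≤ c * t ^ p - t ^ q - log c * t ^ q := by
  rcases ht.eq_or_lt with rfl | ht
  · simpa [zero_rpow hq] using mul_nonneg hc.le (rpow_nonneg le_rfl p)
  · have htq : 0 < t ^ q := rpow_pos_of_pos ht q
    have htpq : 0 < t ^ (p - q) := rpow_pos_of_pos ht (p - q)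
    have hlog : log (c * t ^ (p - q)) ≤ c * t ^ (p - q) - 1 :=
      log_le_sub_one_of_pos (mul_pos hc htpq)
    rw [log_mul hc.ne' htpq.ne', log_rpow ht] at hlog
    have hsplit : t ^ p = t ^ q * t ^ (p - q) := by
      rw [← rpow_add ht, add_sub_cancel]
    rw [hsplit]
    nlinarith [mul_le_mul_of_nonneg_left hlog htq.le]

end Real

section

variable {Ω : Type*} [MeasurableSpace Ω] {μ : Measure Ω} {f : Ω → ℝ} {p q : ℝ}

theorem integral_rpow_mul_log_rpow_div (hf : ∀ x, 0 ≤ f x) (hq : q ≠ 0) {a : ℝ}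
    (ha : a ≠ 0)
    (hq_int : Integrable (fun x => f x ^ q) μ)
    (hlog_int : Integrable (fun x => f x ^ q * Real.log (f x)) μ) :
    ∫ x, f x ^ q * Real.log (f x ^ q / a) ∂μ =
      q * ∫ x, f x ^ q * Real.log (f x) ∂μ - Real.log a * ∫ x, f x ^ q ∂μ := by
  simp_rw [Real.rpow_mul_log_rpow_div (hf _) hq ha]
  rw [integral_sub (hlog_int.const_mul q) (hq_int.const_mul _), integral_const_mul,
    integral_const_mul]

theorem sub_mul_integral_rpow_mul_log_le (hf : ∀ x, 0 ≤ f x) (hq : q ≠ 0)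
    (hq_int : Integrable (fun x => f x ^ q) μ) (hp_int : Integrable (fun x => f x ^ p) μ)
    (hlog_int : Integrable (fun x => f x ^ q * Real.log (f x)) μ)
    (hq_pos : 0 < ∫ x, f x ^ q ∂μ) (hp_pos : 0 < ∫ x, f x ^ p ∂μ) :
    (p - q) * ∫ x, f x ^ q * Real.log (f x) ∂μ ≤
      (∫ x, f x ^ q ∂μ) * Real.log ((∫ x, f x ^ p ∂μ) / ∫ x, f x ^ q ∂μ) := by
  set A := ∫ x, f x ^ q ∂μ
  set B := ∫ x, f x ^ p ∂μ
  have hc : 0 < A / B := div_pos hq_pos hp_pos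
  have hdiff_int : Integrable (fun x => A / B * f x ^ p - f x ^ q) μ :=
    (hp_int.const_mul _).sub hq_int
  calc (p - q) * ∫ x, f x ^ q * Real.log (f x) ∂μ
      = ∫ x, (p - q) * (f x ^ q * Real.log (f x)) ∂μ := (integral_const_mul _ _).symm
    _ ≤ ∫ x, (A / B * f x ^ p - f x ^ q - Real.log (A / B) * f x ^ q) ∂μ :=
        integral_mono (hlog_int.const_mul _)
          (hdiff_int.sub (hq_int.const_mul _))
          fun x => Real.sub_mul_rpow_mul_log_le (hf x) hq hc
    _ = A / B * B - A - Real.log (A / B) * A := by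
        rw [integral_sub hdiff_int (hq_int.const_mul _),
          integral_sub (hp_int.const_mul _) hq_int, integral_const_mul, integral_const_mul]
    _ = A * Real.log (B / A) := by
        rw [div_mul_cancel₀ _ hp_pos.ne', Real.log_div hq_pos.ne' hp_pos.ne',
          Real.log_div hp_pos.ne' hq_pos.ne']
        ring

end

theorem stmt_10_general {Ω : Type*} [MeasurableSpace Ω] (μ : Measure Ω)
    (f : Ω → ℝ) (hfnn : ∀ x, 0 ≤ f x)
    (q : ℝ) (hq0 : 0 < q) (hq2 : q < 2)
    (hq_int : Integrable (fun x => f x ^ q) μ)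
    (h2_int : Integrable (fun x => f x ^ (2:ℝ)) μ)
    (hlog_int : Integrable (fun x => f x ^ q * Real.log (f x)) μ)
    (hq_pos : 0 < ∫ x, f x ^ q ∂μ)
    (h2_pos : 0 < ∫ x, f x ^ (2:ℝ) ∂μ) :
    ∫ x, f x ^ q * Real.log (f x ^ q / ∫ y, f y ^ q ∂μ) ∂μ ≤
      q / (2 - q) * (∫ x, f x ^ q ∂μ) *
        Real.log ((∫ x, f x ^ (2:ℝ) ∂μ) / (∫ x, f x ^ q ∂μ) ^ (2 / q)) := by
  set A := ∫ x, f x ^ q ∂μ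
  set B := ∫ x, f x ^ (2:ℝ) ∂μ
  set I := ∫ x, f x ^ q * Real.log (f x) ∂μ
  have hkey : (2 - q) * I ≤ A * Real.log (B / A) :=
    sub_mul_integral_rpow_mul_log_le hfnn hq0.ne' hq_int h2_int hlog_int hq_pos h2_pos
  rw [integral_rpow_mul_log_rpow_div hfnn hq0.ne' hq_pos.ne' hq_int hlog_int,
    Real.log_div h2_pos.ne' (Real.rpow_pos_of_pos hq_pos _).ne', Real.log_rpow hq_pos]
  rw [Real.log_div h2_pos.ne' hq_pos.ne'] at hkey
  have h2q : 0 < 2 - q := by linarith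
  rw [div_mul_eq_mul_div, div_mul_eq_mul_div, le_div_iff₀ h2q]
  have hrhs : q * A * (Real.log B - 2 / q * Real.log A) =
      q * A * Real.log B - 2 * A * Real.log A := by
    field_simp
  rw [hrhs]
  nlinarith [mul_le_mul_of_nonneg_left hkey hq0.le]

theorem stmt_10 {Ω : Type*} [MeasurableSpace Ω] (μ : Measure Ω) [IsProbabilityMeasure μ]
    (f : Ω → ℝ) (hf : Measurable f) (hfnn : ∀ x, 0 ≤ f x)
    (q : ℝ) (hq0 : 0 < q) (hq2 : q < 2)
    (hq_int : Integrable (fun x => f x ^ q) μ)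
    (h2_int : Integrable (fun x => f x ^ (2:ℝ)) μ)
    (hlog_int : Integrable (fun x => f x ^ q * Real.log (f x)) μ)
    (hq_pos : 0 < ∫ x, f x ^ q ∂μ)
    (h2_pos : 0 < ∫ x, f x ^ (2:ℝ) ∂μ) :
    ∫ x, f x ^ q * Real.log (f x ^ q / ∫ y, f y ^ q ∂μ) ∂μ ≤
      q / (2 - q) * (∫ x, f x ^ q ∂μ) *
        Real.log ((∫ x, f x ^ (2:ℝ) ∂μ) / (∫ x, f x ^ q ∂μ) ^ (2 / q)) :=
  stmt_10_general μ f hfnn q hq0 hq2 hq_int h2_int hlog_int hq_pos h2_pos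
end

section
/- Let μ be a probability measure, f a nonnegative measurable function with finite positive moments, q > 0, and r ≥ 1. Then (1/(r-1)) ( ∫ f^q dμ - (∫ f^{q/r} dμ)^r ) ≤ ∫ f^q log( f^q / ∫ f^q dμ ) dμ (with the left side interpreted as the limit for r = 1). -/
/-!
Put `g = f ^ q`, `I = ∫ g`, `J = ∫ g ^ (1/r)` and `Ent(g) = ∫ g log (g / I)`. The tangent-line bound
`exp t ≥ 1 + t` at `t = (1 - 1/r) log (I / g)` gives pointwise
`g - I ^ (1 - 1/r) g ^ (1/r) ≤ (1 - 1/r) g log (g / I)`, so `I - I ^ (1 - 1/r) J ≤ (1 - 1/r) Ent(g)`.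
Young's inequality `r I ^ (1 - 1/r) J ≤ J ^ r + (r - 1) I` then gives
`I - J ^ r ≤ r (I - I ^ (1 - 1/r) J) ≤ (r - 1) Ent(g)`.
For `r = 1` the left side of the theorem is `0` (as `1 / 0 = 0`), and `Ent(g) ≥ 0` is the same
pointwise bound with exponent `0`, integrated against a probability measure.
-/

open MeasureTheory Real

namespace Real

theorem self_sub_rpow_mul_rpow_le {a b : ℝ} (ha : 0 ≤ a) (hb : 0 < b) (s : ℝ) :
    a - b ^ (1 - s) * a ^ s ≤ (1 - s) * (a * log (a / b)) := by
  rcases ha.eq_or_lt with rfl | ha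
  · simpa using mul_nonneg (rpow_nonneg hb.le (1 - s)) (rpow_nonneg le_rfl s)
  have hexp : b ^ (1 - s) * a ^ s = a * exp ((1 - s) * (log b - log a)) := by
    rw [rpow_def_of_pos hb, rpow_def_of_pos ha, ← exp_add]
    conv_rhs => arg 1; rw [← exp_log ha]
    rw [← exp_add]
    ring_nf
  have htangent := mul_le_mul_of_nonneg_left (add_one_le_exp ((1 - s) * (log b - log a))) ha.le
  rw [hexp, log_div ha.ne' hb.ne']
  linarith

theorem mul_rpow_one_sub_inv_mul_le {a b r : ℝ} (ha : 0 ≤ a) (hb : 0 ≤ b) (hr : 1 ≤ r) :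
    r * (b ^ (1 - r⁻¹) * a) ≤ a ^ r + (r - 1) * b := by
  have hr₀ : 0 < r := zero_lt_one.trans_le hr
  have young := geom_mean_le_arith_mean2_weighted (inv_nonneg.2 hr₀.le)
    (sub_nonneg.2 (inv_le_one_of_one_le₀ hr)) (rpow_nonneg ha r) hb (add_sub_cancel _ _)
  rw [rpow_rpow_inv ha hr₀.ne'] at young
  calc r * (b ^ (1 - r⁻¹) * a) ≤ r * (r⁻¹ * a ^ r + (1 - r⁻¹) * b) := by
        rw [mul_comm (b ^ _)]; gcongr
    _ = a ^ r + (r - 1) * b := by field_simp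

end Real

namespace MeasureTheory

variable {Ω : Type*} [MeasurableSpace Ω] {μ : Measure Ω} {g : Ω → ℝ}

noncomputable def entropy (μ : Measure Ω) (g : Ω → ℝ) : ℝ :=
  ∫ x, g x * log (g x / ∫ y, g y ∂μ) ∂μ

theorem Integrable.mul_log_div (hg : Integrable g μ)
    (hglog : Integrable (fun x => g x * log (g x)) μ) {c : ℝ} (hc : c ≠ 0) :
    Integrable (fun x => g x * log (g x / c)) μ := by
  refine (hglog.sub (hg.mul_const (log c))).congr (ae_of_all _ fun x => ?_)
  rcases eq_or_ne (g x) 0 with h | h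
  · simp [h]
  · simp only [Pi.sub_apply, log_div h hc]
    ring

variable (hg₀ : 0 ≤ᵐ[μ] g) (hg : Integrable g μ)
  (hglog : Integrable (fun x => g x * log (g x)) μ) (hpos : 0 < ∫ x, g x ∂μ)
include hg₀ hg hglog hpos

theorem integral_sub_rpow_mul_integral_rpow_le_entropy {s : ℝ}
    (hgs : Integrable (fun x => g x ^ s) μ) :
    (∫ x, g x ∂μ) - (∫ x, g x ∂μ) ^ (1 - s) * ∫ x, g x ^ s ∂μ ≤ (1 - s) * entropy μ g := by
  rw [entropy, ← integral_const_mul, ← integral_const_mul, ← integral_sub hg (hgs.const_mul _)]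
  exact integral_mono_ae (hg.sub (hgs.const_mul _))
    ((hg.mul_log_div hglog hpos.ne').const_mul _)
    (hg₀.mono fun x hx => self_sub_rpow_mul_rpow_le hx hpos s)

theorem entropy_nonneg [IsProbabilityMeasure μ] : 0 ≤ entropy μ g := by
  simpa using integral_sub_rpow_mul_integral_rpow_le_entropy hg₀ hg hglog hpos
    (s := 0) (by simp)

theorem integral_sub_integral_rpow_inv_rpow_le {r : ℝ} (hr : 1 ≤ r)
    (hgr : Integrable (fun x => g x ^ r⁻¹) μ) :
    (∫ x, g x ∂μ) - (∫ x, g x ^ r⁻¹ ∂μ) ^ r ≤ (r - 1) * entropy μ g := by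
  set I := ∫ x, g x ∂μ
  set J := ∫ x, g x ^ r⁻¹ ∂μ
  have hJ : 0 ≤ J := integral_nonneg_of_ae (hg₀.mono fun x hx => rpow_nonneg hx _)
  have hr₀ : 0 < r := zero_lt_one.trans_le hr
  calc I - J ^ r ≤ r * (I - I ^ (1 - r⁻¹) * J) := by
        linarith [mul_rpow_one_sub_inv_mul_le hJ hpos.le hr]
    _ ≤ r * ((1 - r⁻¹) * entropy μ g) := by
        gcongr
        exact integral_sub_rpow_mul_integral_rpow_le_entropy hg₀ hg hglog hpos hgr
    _ = (r - 1) * entropy μ g := by field_simp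

theorem one_div_sub_one_mul_sub_integral_rpow_inv_rpow_le_entropy [IsProbabilityMeasure μ]
    {r : ℝ} (hr : 1 ≤ r) (hgr : Integrable (fun x => g x ^ r⁻¹) μ) :
    1 / (r - 1) * ((∫ x, g x ∂μ) - (∫ x, g x ^ r⁻¹ ∂μ) ^ r) ≤ entropy μ g := by
  rcases hr.eq_or_lt with rfl | hr₁
  · simpa using entropy_nonneg hg₀ hg hglog hpos
  rw [one_div, inv_mul_le_iff₀ (sub_pos.2 hr₁)]
  exact integral_sub_integral_rpow_inv_rpow_le hg₀ hg hglog hpos hr hgr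

end MeasureTheory

theorem stmt_11_general {Ω : Type*} [MeasurableSpace Ω] (μ : Measure Ω) [IsProbabilityMeasure μ]
    (f : Ω → ℝ) (hfnn : ∀ x, 0 ≤ f x)
    (q r : ℝ) (hr : 1 ≤ r)
    (hq_int : Integrable (fun x => f x ^ q) μ)
    (hqr_int : Integrable (fun x => f x ^ (q / r)) μ)
    (hlog_int : Integrable (fun x => f x ^ q * Real.log (f x)) μ)
    (hq_pos : 0 < ∫ x, f x ^ q ∂μ) :
    1 / (r - 1) * ((∫ x, f x ^ q ∂μ) - (∫ x, f x ^ (q / r) ∂μ) ^ r) ≤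
      ∫ x, f x ^ q * Real.log (f x ^ q / ∫ y, f y ^ q ∂μ) ∂μ := by
  have hpow : ∀ x, f x ^ (q / r) = (f x ^ q) ^ r⁻¹ := fun x => by
    rw [← Real.rpow_mul (hfnn x), div_eq_mul_inv]
  have hlog : ∀ x, f x ^ q * Real.log (f x ^ q) = q * (f x ^ q * Real.log (f x)) := fun x => by
    rcases (hfnn x).eq_or_lt with h | h
    · by_cases hq : q = 0 <;> simp [← h, hq]
    · rw [Real.log_rpow h]
      ring
  simp only [hpow] at hqr_int ⊢
  exact one_div_sub_one_mul_sub_integral_rpow_inv_rpow_le_entropy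
    (ae_of_all _ fun x => Real.rpow_nonneg (hfnn x) q) hq_int
    ((hlog_int.const_mul q).congr (ae_of_all _ fun x => (hlog x).symm)) hq_pos hr hqr_int

theorem stmt_11 {Ω : Type*} [MeasurableSpace Ω] (μ : Measure Ω) [IsProbabilityMeasure μ]
    (f : Ω → ℝ) (hf : Measurable f) (hfnn : ∀ x, 0 ≤ f x)
    (q r : ℝ) (hq : 0 < q) (hr : 1 ≤ r)
    (hq_int : Integrable (fun x => f x ^ q) μ)
    (hqr_int : Integrable (fun x => f x ^ (q / r)) μ)
    (hlog_int : Integrable (fun x => f x ^ q * Real.log (f x)) μ)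
    (hq_pos : 0 < ∫ x, f x ^ q ∂μ) :
    1 / (r - 1) * ((∫ x, f x ^ q ∂μ) - (∫ x, f x ^ (q / r) ∂μ) ^ r) ≤
      ∫ x, f x ^ q * Real.log (f x ^ q / ∫ y, f y ^ q ∂μ) ∂μ :=
  stmt_11_general μ f hfnn q r hr hq_int hqr_int hlog_int hq_pos
end

section
/- Let μ be a probability measure and f a nonnegative measurable function with finite positive q-th moments. Then the function G(r) = r log ∫ f^{q/r} dμ is convex on (0, ∞). -/
open MeasureTheory Real Set

/-!
Hölder's inequality with the conjugate exponents `1 / a`, `1 / b` gives Lyapunov's inequality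
`∫ f ^ (a s + b t) ≤ (∫ f ^ s) ^ a (∫ f ^ t) ^ b`, i.e. `s ↦ log ∫ f ^ s` is convex on `(0, ∞)`.
The function `G(r) = r log ∫ f ^ (q / r)` is the perspective `r φ(q / r)` of this convex function
`φ`, and perspectives of convex functions are convex.
-/

theorem ConvexOn.perspective_Ioi {φ : ℝ → ℝ} (hφ : ConvexOn ℝ (Ioi 0) φ) {q : ℝ} (hq : 0 < q) :
    ConvexOn ℝ (Ioi 0) (fun r => r * φ (q / r)) := by
  refine convexOn_iff_forall_pos.mpr ⟨convex_Ioi 0, fun r₁ hr₁ r₂ hr₂ a b ha hb hab => ?_⟩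
  rw [mem_Ioi] at hr₁ hr₂
  simp only [smul_eq_mul]
  set r := a * r₁ + b * r₂
  have hr : 0 < r := by positivity
  -- `q / r` is the convex combination of `q / r₁` and `q / r₂` with weights `a r₁ / r`, `b r₂ / r`.
  have hweights : a * r₁ / r + b * r₂ / r = 1 := by rw [← add_div, div_self hr.ne']
  have hcomb : a * r₁ / r * (q / r₁) + b * r₂ / r * (q / r₂) = q / r := by
    field_simp
    exact hab
  have h := hφ.2 (mem_Ioi.mpr (div_pos hq hr₁)) (mem_Ioi.mpr (div_pos hq hr₂))
    (by positivity) (by positivity) hweights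
  simp only [smul_eq_mul, hcomb] at h
  calc r * φ (q / r)
      ≤ r * (a * r₁ / r * φ (q / r₁) + b * r₂ / r * φ (q / r₂)) := by gcongr
    _ = a * (r₁ * φ (q / r₁)) + b * (r₂ * φ (q / r₂)) := by field_simp

section Lyapunov

variable {Ω : Type*} [MeasurableSpace Ω] {μ : Measure Ω} {f : Ω → ℝ}

theorem memLp_rpow_mul_of_integrable_rpow (hfnn : ∀ x, 0 ≤ f x) {s a : ℝ} (ha : 0 < a)
    (hint : Integrable (fun x => f x ^ s) μ) :
    MemLp (fun x => f x ^ (a * s)) (ENNReal.ofReal (1 / a)) μ := by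
  have h := (memLp_one_iff_integrable.2 hint).norm_rpow_div (ENNReal.ofReal a)
  rw [ENNReal.toReal_ofReal ha.le, ← ENNReal.ofReal_one, ← ENNReal.ofReal_div_of_pos ha] at h
  convert h using 2 with x
  rw [norm_of_nonneg (rpow_nonneg (hfnn x) s), ← rpow_mul (hfnn x), mul_comm]

theorem integral_rpow_mul_add_mul_le (hfnn : ∀ x, 0 ≤ f x) {s t a b : ℝ} (hs : 0 < s)
    (ht : 0 < t) (ha : 0 < a) (hb : 0 < b) (hab : a + b = 1)
    (hint_s : Integrable (fun x => f x ^ s) μ) (hint_t : Integrable (fun x => f x ^ t) μ) :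
    ∫ x, f x ^ (a * s + b * t) ∂μ ≤ (∫ x, f x ^ s ∂μ) ^ a * (∫ x, f x ^ t ∂μ) ^ b := by
  have holder := integral_mul_le_Lp_mul_Lq_of_nonneg (holderConjugate_one_div ha hb hab)
    (ae_of_all μ fun x => rpow_nonneg (hfnn x) (a * s))
    (ae_of_all μ fun x => rpow_nonneg (hfnn x) (b * t))
    (memLp_rpow_mul_of_integrable_rpow hfnn ha hint_s)
    (memLp_rpow_mul_of_integrable_rpow hfnn hb hint_t)
  have rpow_mul_rpow_inv {c u : ℝ} (hc : 0 < c) (x : Ω) : (f x ^ (c * u)) ^ (1 / c) = f x ^ u := by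
    rw [← rpow_mul (hfnn x)]
    field_simp
  simpa only [← rpow_add' (hfnn _) (by positivity : a * s + b * t ≠ 0), rpow_mul_rpow_inv ha,
    rpow_mul_rpow_inv hb, one_div_one_div] using holder

theorem convexOn_log_integral_rpow (hfnn : ∀ x, 0 ≤ f x)
    (hint : ∀ s : ℝ, 0 < s → Integrable (fun x => f x ^ s) μ)
    (hpos : ∀ s : ℝ, 0 < s → 0 < ∫ x, f x ^ s ∂μ) :
    ConvexOn ℝ (Ioi (0 : ℝ)) (fun s => log (∫ x, f x ^ s ∂μ)) := by
  refine convexOn_iff_forall_pos.mpr ⟨convex_Ioi 0, fun s hs t ht a b ha hb hab => ?_⟩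
  rw [mem_Ioi] at hs ht
  have hI_s := hpos s hs
  have hI_t := hpos t ht
  simp only [smul_eq_mul]
  rw [← log_rpow hI_s, ← log_rpow hI_t, ← log_mul (by positivity) (by positivity)]
  exact log_le_log (hpos _ (by positivity))
    (integral_rpow_mul_add_mul_le hfnn hs ht ha hb hab (hint s hs) (hint t ht))

end Lyapunov

theorem stmt_12_general {Ω : Type*} [MeasurableSpace Ω] (μ : Measure Ω)
    (f : Ω → ℝ) (hfnn : ∀ x, 0 ≤ f x)
    (q : ℝ) (hq : 0 < q)
    (hint : ∀ s : ℝ, 0 < s → Integrable (fun x => f x ^ s) μ)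
    (hpos : ∀ s : ℝ, 0 < s → 0 < ∫ x, f x ^ s ∂μ) :
    ConvexOn ℝ (Set.Ioi 0) (fun r : ℝ => r * Real.log (∫ x, f x ^ (q / r) ∂μ)) :=
  (convexOn_log_integral_rpow hfnn hint hpos).perspective_Ioi hq

theorem stmt_12 {Ω : Type*} [MeasurableSpace Ω] (μ : Measure Ω) [IsProbabilityMeasure μ]
    (f : Ω → ℝ) (hf : Measurable f) (hfnn : ∀ x, 0 ≤ f x)
    (q : ℝ) (hq : 0 < q)
    (hint : ∀ s : ℝ, 0 < s → Integrable (fun x => f x ^ s) μ)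
    (hpos : ∀ s : ℝ, 0 < s → 0 < ∫ x, f x ^ s ∂μ) :
    ConvexOn ℝ (Set.Ioi 0) (fun r : ℝ => r * Real.log (∫ x, f x ^ (q / r) ∂μ)) :=
  stmt_12_general μ f hfnn q hq hint hpos
end

section
/- Let 0 < q ≤ 1, let μ be a probability measure, and let f be a function with ‖f‖_{L²(μ)} < ∞. Suppose the Poincaré-Wirtinger inequality C_P² ‖∇f‖_{L²}² ≥ ‖f‖_{L²}² - ‖f‖_{L¹}² holds. Then ‖f‖_{L^q}² + ((2-q)/q) C_P² ‖∇f‖_{L²}² - ‖f‖_{L²}² ≥ 0, where ‖f‖_{L^q} = (∫|f|^q dμ)^{1/q}. -/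
/-!
Put `θ = q / (2 - q)`. Hölder's inequality with the exponents `1 / (2 - q)` and
`(1 - q) / (2 - q)`, which sum to one, applied to `|f| ^ q` and `f ^ 2`, interpolates
`‖f‖₁² ≤ (‖f‖_q²) ^ θ * (‖f‖₂²) ^ (1 - θ)`. Weighted AM–GM (the convexity step of the paper)
linearises this to `‖f‖₁² ≤ θ ‖f‖_q² + (1 - θ) ‖f‖₂²`; multiplying by `1 / θ = (2 - q) / q` and
inserting the Poincaré–Wirtinger bound for `‖f‖₂² - ‖f‖₁²` gives the claim.
-/

open MeasureTheory

theorem integral_rpow_mul_rpow_le_of_nonneg {α : Type*} [MeasurableSpace α] {μ : Measure α}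
    {f g : α → ℝ} (hf : 0 ≤ᵐ[μ] f) (hg : 0 ≤ᵐ[μ] g) (hfi : Integrable f μ) (hgi : Integrable g μ)
    {p q : ℝ} (hp : 0 ≤ p) (hq : 0 ≤ q) (hpq : p + q = 1) :
    ∫ x, f x ^ p * g x ^ q ∂μ ≤ (∫ x, f x ∂μ) ^ p * (∫ x, g x ∂μ) ^ q := by
  have hfg : 0 ≤ᵐ[μ] fun x => f x ^ p * g x ^ q := by
    filter_upwards [hf, hg] with x hfx hgx
    exact mul_nonneg (Real.rpow_nonneg hfx p) (Real.rpow_nonneg hgx q)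
  have hofReal : ∀ᵐ x ∂μ, ENNReal.ofReal (f x ^ p * g x ^ q)
      = ENNReal.ofReal (f x) ^ p * ENNReal.ofReal (g x) ^ q := by
    filter_upwards [hf, hg] with x hfx hgx
    rw [ENNReal.ofReal_mul (Real.rpow_nonneg hfx p), ENNReal.ofReal_rpow_of_nonneg hfx hp,
      ENNReal.ofReal_rpow_of_nonneg hgx hq]
  rw [integral_eq_lintegral_of_nonneg_ae hfg
      ((hfi.aemeasurable.pow_const p).mul (hgi.aemeasurable.pow_const q)).aestronglyMeasurable,
    integral_eq_lintegral_of_nonneg_ae hf hfi.1, integral_eq_lintegral_of_nonneg_ae hg hgi.1,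
    ENNReal.toReal_rpow, ENNReal.toReal_rpow, ← ENNReal.toReal_mul, lintegral_congr_ae hofReal]
  refine ENNReal.toReal_mono ?_ (ENNReal.lintegral_mul_norm_pow_le
    hfi.aemeasurable.ennreal_ofReal hgi.aemeasurable.ennreal_ofReal hp hq hpq)
  exact ENNReal.mul_ne_top (ENNReal.rpow_ne_top_of_nonneg hp hfi.lintegral_lt_top.ne)
    (ENNReal.rpow_ne_top_of_nonneg hq hgi.lintegral_lt_top.ne)

theorem integral_abs_le_integral_abs_rpow_mul_integral_sq {α : Type*} [MeasurableSpace α]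
    {μ : Measure α} {f : α → ℝ} {q : ℝ} (hq1 : q ≤ 1)
    (hfq : Integrable (fun x => |f x| ^ q) μ) (hf2 : Integrable (fun x => f x ^ 2) μ) :
    ∫ x, |f x| ∂μ ≤
      (∫ x, |f x| ^ q ∂μ) ^ (1 / (2 - q)) * (∫ x, f x ^ 2 ∂μ) ^ ((1 - q) / (2 - q)) := by
  have h2q : 0 < 2 - q := by linarith
  have hexp : q * (1 / (2 - q)) + (2 : ℕ) * ((1 - q) / (2 - q)) = 1 := by
    field_simp; push_cast; ring
  have hpt (t : ℝ) : (|t| ^ q) ^ (1 / (2 - q)) * (t ^ 2) ^ ((1 - q) / (2 - q)) = |t| := by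
    rw [← sq_abs, ← Real.rpow_natCast, ← Real.rpow_mul (abs_nonneg _),
      ← Real.rpow_mul (abs_nonneg _), ← Real.rpow_add' (abs_nonneg _) (by rw [hexp]; norm_num),
      hexp, Real.rpow_one]
  simpa only [hpt] using integral_rpow_mul_rpow_le_of_nonneg
    (.of_forall fun x => Real.rpow_nonneg (abs_nonneg (f x)) q)
    (.of_forall fun x => sq_nonneg (f x)) hfq hf2 (one_div_nonneg.2 h2q.le)
    (div_nonneg (sub_nonneg.2 hq1) h2q.le) (by field_simp; ring)

theorem two_sub_mul_sq_integral_abs_le {α : Type*} [MeasurableSpace α]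
    {μ : Measure α} {f : α → ℝ} {q : ℝ} (hq0 : 0 < q) (hq1 : q ≤ 1)
    (hfq : Integrable (fun x => |f x| ^ q) μ) (hf2 : Integrable (fun x => f x ^ 2) μ) :
    (2 - q) * (∫ x, |f x| ∂μ) ^ 2 ≤
      q * (∫ x, |f x| ^ q ∂μ) ^ (2 / q) + 2 * (1 - q) * ∫ x, f x ^ 2 ∂μ := by
  have h2q : 0 < 2 - q := by linarith
  have hinterp := integral_abs_le_integral_abs_rpow_mul_integral_sq hq1 hfq hf2
  set I := ∫ x, |f x| ^ q ∂μ
  set A := ∫ x, f x ^ 2 ∂μ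
  have hI : 0 ≤ I := integral_nonneg fun x => Real.rpow_nonneg (abs_nonneg (f x)) q
  have hA : 0 ≤ A := integral_nonneg fun x => sq_nonneg (f x)
  have hsq : (∫ x, |f x| ∂μ) ^ 2 ≤ (I ^ (2 / q)) ^ (q / (2 - q)) * A ^ (2 * (1 - q) / (2 - q)) :=
    calc _ ≤ (I ^ (1 / (2 - q)) * A ^ ((1 - q) / (2 - q))) ^ 2 :=
          pow_le_pow_left₀ (integral_nonneg fun x => abs_nonneg _) hinterp 2
      _ = _ := by
        rw [mul_pow, ← Real.rpow_mul hI, ← Real.rpow_mul_natCast hI, ← Real.rpow_mul_natCast hA]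
        congr 2 <;> field_simp <;> norm_num
  have hamgm := Real.geom_mean_le_arith_mean2_weighted (div_nonneg hq0.le h2q.le)
    (div_nonneg (by linarith) h2q.le) (Real.rpow_nonneg hI (2 / q)) hA
    (show q / (2 - q) + 2 * (1 - q) / (2 - q) = 1 by field_simp; ring)
  calc (2 - q) * (∫ x, |f x| ∂μ) ^ 2
      ≤ (2 - q) * (q / (2 - q) * I ^ (2 / q) + 2 * (1 - q) / (2 - q) * A) := by
        gcongr; exact hsq.trans hamgm
    _ = q * I ^ (2 / q) + 2 * (1 - q) * A := by field_simp

theorem stmt_16_general {Ω : Type*} [MeasurableSpace Ω] (μ : Measure Ω)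
    (f : Ω → ℝ)
    (q : ℝ) (hq0 : 0 < q) (hq1 : q ≤ 1)
    (hf2 : Integrable (fun x => f x ^ 2) μ)
    (hfq : Integrable (fun x => |f x| ^ q) μ)
    (C_P D : ℝ)
    (hP : (∫ x, f x ^ 2 ∂μ) - (∫ x, |f x| ∂μ) ^ 2 ≤ C_P ^ 2 * D) :
    0 ≤ (∫ x, |f x| ^ q ∂μ) ^ (2 / q) + (2 - q) / q * C_P ^ 2 * D - ∫ x, f x ^ 2 ∂μ := by
  have hkey := two_sub_mul_sq_integral_abs_le hq0 hq1 hfq hf2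
  have hP' := mul_le_mul_of_nonneg_left hP (by linarith : (0 : ℝ) ≤ 2 - q)
  rw [← mul_nonneg_iff_of_pos_left hq0]
  calc (0 : ℝ) ≤ q * (∫ x, |f x| ^ q ∂μ) ^ (2 / q) + (2 - q) * (C_P ^ 2 * D)
        - q * ∫ x, f x ^ 2 ∂μ := by linarith
    _ = q * ((∫ x, |f x| ^ q ∂μ) ^ (2 / q) + (2 - q) / q * C_P ^ 2 * D
        - ∫ x, f x ^ 2 ∂μ) := by field_simp

theorem stmt_16 {Ω : Type*} [MeasurableSpace Ω] (μ : Measure Ω) [IsProbabilityMeasure μ]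
    (f : Ω → ℝ) (hf : Measurable f)
    (q : ℝ) (hq0 : 0 < q) (hq1 : q ≤ 1)
    (hf1 : Integrable (fun x => |f x|) μ)
    (hf2 : Integrable (fun x => f x ^ 2) μ)
    (hfq : Integrable (fun x => |f x| ^ q) μ)
    (C_P D : ℝ) (hD : 0 ≤ D)
    (hP : (∫ x, f x ^ 2 ∂μ) - (∫ x, |f x| ∂μ) ^ 2 ≤ C_P ^ 2 * D) :
    0 ≤ (∫ x, |f x| ^ q ∂μ) ^ (2 / q) + (2 - q) / q * C_P ^ 2 * D - ∫ x, f x ^ 2 ∂μ :=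
  stmt_16_general μ f q hq0 hq1 hf2 hfq C_P D hP
end

section
/- For real numbers α with 1 ≤ α ≤ 2 and positive reals u, v, the quadratic form Q(a,b) = c₁ a² + c₂ a b + c₃ b² is positive semidefinite, where c₁ = (α-2)(u^{α/2} - v^{α/2}) u^{α/2-2} + α u^{α-2}, c₂ = -2α u^{α/2-1} v^{α/2-1}, c₃ = -(α-2)(u^{α/2} - v^{α/2}) v^{α/2-2} + α v^{α-2}. -/
/-!
Put `x = u^{α/2}`, `y = v^{α/2}`, `p = a/u`, `q = b/v`. Then every power of `u` and `v` in `Q`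
becomes a monomial in `x, y` divided by `u^2`, `uv` or `v^2`, and
`Q(a,b) = 2(α-1)(xp - yq)² + (2-α)·xy·(p - q)²`,
a sum of two squares with nonnegative weights when `1 ≤ α ≤ 2`.
-/

namespace Real

lemma rpow_sub_two {w : ℝ} (hw : w ≠ 0) (y : ℝ) : w ^ (y - 2) = w ^ y / w ^ 2 := by
  exact_mod_cast rpow_sub_natCast hw y 2

lemma rpow_eq_rpow_half_sq {w : ℝ} (hw : 0 ≤ w) (y : ℝ) : w ^ y = (w ^ (y / 2)) ^ 2 := by
  rw [← rpow_mul_natCast hw]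
  norm_num

end Real

lemma entropyForm_eq_sum_sq (α x y p q : ℝ) :
    ((α - 2) * (x - y) * x + α * x ^ 2) * p ^ 2 + (-2 * α * x * y) * p * q
      + (-(α - 2) * (x - y) * y + α * y ^ 2) * q ^ 2
      = 2 * (α - 1) * (x * p - y * q) ^ 2 + (2 - α) * (x * y) * (p - q) ^ 2 := by
  ring

lemma entropyForm_nonneg {α x y : ℝ} (hα1 : 1 ≤ α) (hα2 : α ≤ 2) (hxy : 0 ≤ x * y) (p q : ℝ) :
    0 ≤ ((α - 2) * (x - y) * x + α * x ^ 2) * p ^ 2 + (-2 * α * x * y) * p * q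
      + (-(α - 2) * (x - y) * y + α * y ^ 2) * q ^ 2 := by
  rw [entropyForm_eq_sum_sq]
  have h₁ : 0 ≤ 2 * (α - 1) := by linarith
  have h₂ : 0 ≤ 2 - α := by linarith
  positivity

theorem stmt_18 (α u v : ℝ) (hα1 : 1 ≤ α) (hα2 : α ≤ 2) (hu : 0 < u) (hv : 0 < v)
    (a b : ℝ) :
    0 ≤ ((α - 2) * (u ^ (α / 2) - v ^ (α / 2)) * u ^ (α / 2 - 2) + α * u ^ (α - 2)) * a ^ 2
      + (-2 * α * u ^ (α / 2 - 1) * v ^ (α / 2 - 1)) * a * b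
      + (-(α - 2) * (u ^ (α / 2) - v ^ (α / 2)) * v ^ (α / 2 - 2) + α * v ^ (α - 2)) * b ^ 2 := by
  have hxy : 0 ≤ u ^ (α / 2) * v ^ (α / 2) := by positivity
  convert entropyForm_nonneg hα1 hα2 hxy (a / u) (b / v) using 1
  rw [Real.rpow_sub_two hu.ne', Real.rpow_sub_two hv.ne', Real.rpow_sub_two hu.ne',
    Real.rpow_sub_two hv.ne', Real.rpow_sub_one hu.ne', Real.rpow_sub_one hv.ne',
    Real.rpow_eq_rpow_half_sq hu.le α, Real.rpow_eq_rpow_half_sq hv.le α]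
  field_simp
end
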